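/- Let d ≥ 3 and 1 ≤ k ≤ d−1 be integers, let l be an integer with max(d−2k, 0) ≤ l ≤ d−k, and let ν < 0. Then lim_{a→∞} e^{−a(d−1)} · Σ_{n∈ℕ^d} (Π_{i=1}^d a^{n_i}/n_i!) · exp(ν · Σ_{D⊆{1,…,2d−2k−l}} 2^{|D∩{1,…,l}|} Π_{m∈{1,…,d}∖D} n_m) = 2k − d + l. -/

import Mathlib

/-!
Write the inner sum as `S(n) = ∏ᵢ (nᵢ + wᵢ)`, where the offset `wᵢ` is `2`, `1` or `0` and vanishes
exactly for `i ≥ T = 2d - 2k - l`. Under the Poisson weights `∏ᵢ a^{nᵢ}/nᵢ!`, the multi-indices with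
some `nᵢ = 0`, `i ≥ T`, have `S(n) = 0` and total weight `e^{ad} - e^{aT}(e^a - 1)^{d-T}`; after the
normalisation by `e^{-a(d-1)}` this is `e^a (1 - (1 - e^{-a})^{d-T}) → d - T = 2k + l - d`.
On the other multi-indices every factor of `S` is at least `1`, so `S(n) ≥ nₚ` and `S(n) ≥ nₚ n_q`.
Fix `K` with `d e^{νK/d} ≤ 1`. If two coordinates exceed `K`, then `S(n) ≥ K nₘ` for every `m` and
`e^{νS} ≤ ∏ₘ e^{νK nₘ/d}`; otherwise `e^{νS} ≤ e^{ν nᵢ}` with all other coordinates at most `K`.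
Both majorants sum to `O(a^{K(d-1)} e^a)`, which is negligible against `e^{a(d-1)}` because `d ≥ 3`.
-/

open Filter Finset Topology

theorem hasSum_fin_pi_prod {β : Type*} {d : ℕ} {g : Fin d → β → ℝ} {s : Fin d → ℝ}
    (hg0 : ∀ i x, 0 ≤ g i x) (hg : ∀ i, HasSum (g i) (s i)) :
    HasSum (fun n : Fin d → β => ∏ i, g i (n i)) (∏ i, s i) := by
  induction d with
  | zero => simp
  | succ d ih =>
    have htail := ih (g := fun i => g i.succ) (s := fun i => s i.succ) (fun i => hg0 i.succ)
      (fun i => hg i.succ)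
    have hsummable := Summable.mul_of_nonneg (f := g 0)
      (g := fun n : Fin d → β => ∏ i : Fin d, g i.succ (n i)) (hg 0).summable htail.summable
      (fun x => hg0 0 x) fun n => prod_nonneg fun i _ => hg0 i.succ (n i)
    have hprod := HasSum.mul (f := g 0) (g := fun n : Fin d → β => ∏ i : Fin d, g i.succ (n i))
      (hg 0) htail hsummable
    have hcons : (fun n => ∏ i, g i (n i)) ∘ Fin.consEquiv (fun _ => β) =
        fun p => g 0 p.1 * ∏ i : Fin d, g i.succ (p.2 i) := by
      ext p
      simp only [Function.comp_apply, Fin.consEquiv_apply, Fin.prod_univ_succ, Fin.cons_zero,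
        Fin.cons_succ]
    rw [← (Fin.consEquiv fun _ => β).hasSum_iff, hcons, Fin.prod_univ_succ]
    exact hprod

theorem Real.hasSum_pow_div_factorial (x : ℝ) :
    HasSum (fun n : ℕ => x ^ n / n.factorial) (Real.exp x) := by
  rw [Real.exp_eq_exp_ℝ]
  exact NormedSpace.expSeries_div_hasSum_exp x

theorem hasSum_pow_div_factorial_mul_exp (a c : ℝ) :
    HasSum (fun n : ℕ => a ^ n / n.factorial * Real.exp (c * n)) (Real.exp (a * Real.exp c)) := by
  convert Real.hasSum_pow_div_factorial (a * Real.exp c) using 2 with n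
  rw [mul_pow, ← Real.exp_nat_mul, mul_comm c]
  ring

theorem hasSum_pow_div_factorial_ite_ne_zero (a : ℝ) :
    HasSum (fun n : ℕ => if n ≠ 0 then a ^ n / n.factorial else 0) (Real.exp a - 1) := by
  have h := (Real.hasSum_pow_div_factorial a).update 0 0
  rw [Nat.factorial_zero, Nat.cast_one, pow_zero, div_one, zero_sub, neg_add_eq_sub] at h
  have hupdate : (fun n : ℕ => if n ≠ 0 then a ^ n / n.factorial else 0) =
      Function.update (fun n : ℕ => a ^ n / n.factorial) 0 0 := by
    ext n
    rcases eq_or_ne n 0 with rfl | hn <;> simp [*]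
  rwa [hupdate]

theorem hasSum_pow_div_factorial_ite_le (a : ℝ) (K : ℕ) :
    HasSum (fun n : ℕ => if n ≤ K then a ^ n / n.factorial else 0)
      (∑ n ∈ range (K + 1), a ^ n / n.factorial) := by
  have h := hasSum_sum_of_ne_finset_zero (L := SummationFilter.unconditional ℕ)
    (f := fun n : ℕ => if n ≤ K then a ^ n / n.factorial else 0) (s := range (K + 1))
    fun n hn => if_neg (by simpa [Nat.lt_succ_iff] using hn)
  rwa [sum_congr rfl fun n hn => if_pos (Nat.lt_succ_iff.mp (mem_range.mp hn))] at h

theorem sum_range_pow_div_factorial_le {a : ℝ} (ha : 1 ≤ a) (K : ℕ) :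
    ∑ n ∈ range (K + 1), a ^ n / n.factorial ≤ (K + 1) * a ^ K := by
  calc ∑ n ∈ range (K + 1), a ^ n / n.factorial ≤ ∑ _n ∈ range (K + 1), a ^ K := by
        refine sum_le_sum fun n hn => ?_
        calc a ^ n / n.factorial ≤ a ^ n :=
              div_le_self (by positivity) (by exact_mod_cast n.factorial_pos)
          _ ≤ a ^ K := pow_le_pow_right₀ ha (Nat.lt_succ_iff.mp (mem_range.mp hn))
    _ = (K + 1) * a ^ K := by simp

theorem sum_powerset_prod_mul_prod_compl {ι R : Type*} [Fintype ι] [DecidableEq ι] [CommSemiring R]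
    (s : Finset ι) (f x : ι → R) :
    ∑ D ∈ s.powerset, (∏ i ∈ D, f i) * ∏ i ∈ univ \ D, x i =
      ∏ i, (x i + if i ∈ s then f i else 0) := by
  have hsplit : ∀ D ⊆ s, (∏ i ∈ s \ D, x i) * ∏ i ∈ univ \ s, x i = ∏ i ∈ univ \ D, x i := by
    intro D hD
    rw [← prod_sdiff (sdiff_subset_sdiff (subset_refl univ) hD),
      sdiff_sdiff_sdiff_cancel_left (subset_univ s)]
  calc ∑ D ∈ s.powerset, (∏ i ∈ D, f i) * ∏ i ∈ univ \ D, x i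
      = (∏ i ∈ s, (f i + x i)) * ∏ i ∈ univ \ s, x i := by
        rw [prod_add, sum_mul]
        exact sum_congr rfl fun D hD => by rw [mul_assoc, hsplit D (mem_powerset.mp hD)]
    _ = ∏ i, (x i + if i ∈ s then f i else 0) := by
        rw [← prod_sdiff (subset_univ s), mul_comm]
        congr 1
        · refine prod_congr rfl fun i hi => ?_
          rw [if_neg (Finset.mem_sdiff.mp hi).2, add_zero]
        · refine prod_congr rfl fun i hi => ?_
          rw [if_pos hi, add_comm]

theorem prod_ite_val_lt {R : Type*} [CommMonoid R] {d T : ℕ} (hT : T ≤ d) (A B : R) :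
    ∏ i : Fin d, (if (i : ℕ) < T then A else B) = A ^ T * B ^ (d - T) := by
  rw [prod_ite, prod_const, prod_const, Fin.card_filter_val_lt, min_eq_right hT, filter_not,
    card_sdiff_of_subset (filter_subset _ _), Fin.card_filter_val_lt, min_eq_right hT, card_univ,
    Fintype.card_fin]

theorem exp_neg_mul_sub_eq {d T : ℕ} (hT : T ≤ d) (a : ℝ) :
    Real.exp (-a * ((d : ℝ) - 1)) * (Real.exp a ^ d - Real.exp a ^ T * (Real.exp a - 1) ^ (d - T)) =
      Real.exp a * (1 - (1 - Real.exp (-a)) ^ (d - T)) := by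
  obtain ⟨J, rfl⟩ := Nat.exists_eq_add_of_le hT
  set E := Real.exp a
  set F := Real.exp (-a)
  have hinv : E * F = 1 := by rw [← Real.exp_add, add_neg_cancel, Real.exp_zero]
  have hprefactor : Real.exp (-a * (((T + J : ℕ) : ℝ) - 1)) = E * F ^ (T + J) := by
    rw [← Real.exp_nat_mul, ← Real.exp_add]
    ring_nf
  have hsub : E - 1 = E * (1 - F) := by linear_combination hinv
  calc Real.exp (-a * (((T + J : ℕ) : ℝ) - 1)) * (E ^ (T + J) - E ^ T * (E - 1) ^ (T + J - T))
      = E * (E * F) ^ (T + J) * (1 - (1 - F) ^ J) := by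
        rw [hprefactor, hsub, mul_pow, Nat.add_sub_cancel_left]
        ring
    _ = E * (1 - (1 - F) ^ (T + J - T)) := by rw [hinv, one_pow, mul_one, Nat.add_sub_cancel_left]

theorem tendsto_exp_mul_one_sub_one_sub_exp_neg_pow (J : ℕ) :
    Tendsto (fun a => Real.exp a * (1 - (1 - Real.exp (-a)) ^ J)) atTop (𝓝 (J : ℝ)) := by
  have hgeom : ∀ a : ℝ,
      Real.exp a * (1 - (1 - Real.exp (-a)) ^ J) = ∑ i ∈ range J, (1 - Real.exp (-a)) ^ i := by
    intro a
    have hinv : Real.exp a * Real.exp (-a) = 1 := by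
      rw [← Real.exp_add, add_neg_cancel, Real.exp_zero]
    linear_combination Real.exp a * geom_sum_mul (1 - Real.exp (-a)) J +
      (∑ i ∈ range J, (1 - Real.exp (-a)) ^ i) * hinv
  have hterm : Tendsto (fun a => 1 - Real.exp (-a)) atTop (𝓝 1) := by
    simpa using tendsto_const_nhds.sub Real.tendsto_exp_neg_atTop_nhds_zero
  simp_rw [hgeom]
  have hsum := tendsto_finsetSum (range J) fun i _ => by simpa using hterm.pow i
  simpa using hsum

section Orientations

variable {d : ℕ}

def orientationOffset (T l : ℕ) (i : Fin d) : ℝ :=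
  if (i : ℕ) < T then (if (i : ℕ) < l then 2 else 1) else 0

theorem sum_powerset_eq_prod_add_orientationOffset (T l : ℕ) (x : Fin d → ℝ) :
    ∑ D ∈ (univ.filter fun i : Fin d => (i : ℕ) < T).powerset,
        (2 : ℝ) ^ (D.filter fun i : Fin d => (i : ℕ) < l).card * ∏ m ∈ univ \ D, x m =
      ∏ i, (x i + orientationOffset T l i) := by
  have htwo : ∀ D : Finset (Fin d), (2 : ℝ) ^ (D.filter fun i : Fin d => (i : ℕ) < l).card =
      ∏ i ∈ D, (if (i : ℕ) < l then 2 else 1) := by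
    intro D
    rw [prod_ite, prod_const, prod_const_one, mul_one]
  simp_rw [htwo, sum_powerset_prod_mul_prod_compl, mem_filter, mem_univ, true_and]
  rfl

theorem orientationOffset_nonneg (T l : ℕ) (i : Fin d) : 0 ≤ orientationOffset T l i := by
  unfold orientationOffset
  split_ifs <;> norm_num

theorem one_le_add_orientationOffset {T : ℕ} (l : ℕ) {n : Fin d → ℕ}
    (hn : ∀ i : Fin d, T ≤ (i : ℕ) → n i ≠ 0) (i : Fin d) :
    1 ≤ (n i : ℝ) + orientationOffset T l i := by
  unfold orientationOffset
  split_ifs with hT hl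
  · linarith [(n i).cast_nonneg (α := ℝ)]
  · linarith [(n i).cast_nonneg (α := ℝ)]
  · simpa using Nat.one_le_iff_ne_zero.mpr (hn i (not_lt.mp hT))

noncomputable def tailPositiveWeight (T : ℕ) (a : ℝ) (i : Fin d) (x : ℕ) : ℝ :=
  if (i : ℕ) < T ∨ x ≠ 0 then a ^ x / x.factorial else 0

theorem tailPositiveWeight_nonneg (T : ℕ) {a : ℝ} (ha : 0 ≤ a) (i : Fin d) (x : ℕ) :
    0 ≤ tailPositiveWeight T a i x := by
  unfold tailPositiveWeight
  split_ifs <;> positivity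

theorem hasSum_prod_tailPositiveWeight (T : ℕ) {a : ℝ} (ha : 0 ≤ a) :
    HasSum (fun n : Fin d → ℕ => ∏ i, tailPositiveWeight T a i (n i))
      (∏ i : Fin d, if (i : ℕ) < T then Real.exp a else Real.exp a - 1) := by
  refine hasSum_fin_pi_prod (tailPositiveWeight_nonneg T ha) fun i => ?_
  unfold tailPositiveWeight
  split_ifs with hi
  · simpa [hi] using Real.hasSum_pow_div_factorial a
  · simpa [hi] using hasSum_pow_div_factorial_ite_ne_zero a

theorem prod_tailPositiveWeight_of_forall_ne_zero {T : ℕ} (a : ℝ) {n : Fin d → ℕ}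
    (hn : ∀ i : Fin d, T ≤ (i : ℕ) → n i ≠ 0) :
    ∏ i, tailPositiveWeight T a i (n i) = ∏ i, a ^ (n i) / ((n i).factorial : ℝ) :=
  prod_congr rfl fun i _ => if_pos ((lt_or_ge (i : ℕ) T).imp_right (hn i))

theorem prod_tailPositiveWeight_eq_zero {T : ℕ} (a : ℝ) {n : Fin d → ℕ} {i : Fin d}
    (hiT : T ≤ (i : ℕ)) (hi : n i = 0) : ∏ i, tailPositiveWeight T a i (n i) = 0 :=
  prod_eq_zero (mem_univ i) (if_neg (by omega))

theorem prod_mul_exp_eq_add_tailPositiveWeight (T l : ℕ) (a ν : ℝ) (n : Fin d → ℕ) :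
    (∏ i, a ^ (n i) / ((n i).factorial : ℝ)) *
        Real.exp (ν * ∏ i, ((n i : ℝ) + orientationOffset T l i)) =
      ((∏ i, a ^ (n i) / ((n i).factorial : ℝ)) - ∏ i, tailPositiveWeight T a i (n i)) +
        (∏ i, tailPositiveWeight T a i (n i)) *
          Real.exp (ν * ∏ i, ((n i : ℝ) + orientationOffset T l i)) := by
  by_cases hn : ∀ i : Fin d, T ≤ (i : ℕ) → n i ≠ 0
  · rw [prod_tailPositiveWeight_of_forall_ne_zero a hn, sub_self, zero_add]
  · push Not at hn
    obtain ⟨i, hiT, hi⟩ := hn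
    have hfactor : ∏ i, ((n i : ℝ) + orientationOffset T l i) = 0 :=
      prod_eq_zero (mem_univ i) (by simp [orientationOffset, hi, not_lt.mpr hiT])
    rw [prod_tailPositiveWeight_eq_zero a hiT hi, hfactor]
    simp

theorem summable_tailPositiveWeight_mul_exp (T l : ℕ) {a ν : ℝ} (ha : 0 ≤ a) (hν : ν ≤ 0) :
    Summable fun n : Fin d → ℕ => (∏ i, tailPositiveWeight T a i (n i)) *
      Real.exp (ν * ∏ i, ((n i : ℝ) + orientationOffset T l i)) := by
  have hweight_nonneg : ∀ n : Fin d → ℕ, 0 ≤ ∏ i, tailPositiveWeight T a i (n i) :=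
    fun n => prod_nonneg fun i _ => tailPositiveWeight_nonneg T ha i (n i)
  refine (hasSum_prod_tailPositiveWeight T ha).summable.of_nonneg_of_le
    (fun n => mul_nonneg (hweight_nonneg n) (Real.exp_pos _).le) fun n => ?_
  refine mul_le_of_le_one_right (hweight_nonneg n) (Real.exp_le_one_iff.mpr ?_)
  exact mul_nonpos_of_nonpos_of_nonneg hν
    (prod_nonneg fun i _ => add_nonneg (n i).cast_nonneg (orientationOffset_nonneg T l i))

end Orientations

section Remainder

variable {d : ℕ}

theorem exp_mul_le_of_pair_le (hd : 0 < d) {ν S : ℝ} (hν : ν ≤ 0) (K : ℕ) (x : Fin d → ℕ)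
    (hsingle : ∀ p, (x p : ℝ) ≤ S) (hpair : ∀ p q, p ≠ q → (x p : ℝ) * x q ≤ S) :
    Real.exp (ν * S) ≤ ∏ m, Real.exp (ν * K / d * x m) +
      ∑ i, ∏ m, (if m = i then Real.exp (ν * x m) else if x m ≤ K then 1 else 0) := by
  have hterm_nonneg : ∀ i,
      0 ≤ ∏ m, (if m = i then Real.exp (ν * x m) else if x m ≤ K then (1 : ℝ) else 0) :=
    fun i => prod_nonneg fun m _ => by split_ifs <;> positivity
  by_cases hbig : ∃ p q, p ≠ q ∧ K < x p ∧ K < x q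
  · obtain ⟨p, q, hpq, hp, hq⟩ := hbig
    have hK : ∀ m, (K : ℝ) * x m ≤ S := by
      intro m
      rcases eq_or_ne m p with rfl | hmp
      · calc (K : ℝ) * x m ≤ x q * x m := by gcongr
          _ ≤ S := hpair q m hpq.symm
      · calc (K : ℝ) * x m ≤ x p * x m := by gcongr
          _ ≤ S := hpair p m hmp.symm
    have hexponent : ν * S ≤ ν * K / d * ∑ m, (x m : ℝ) := by
      have hsum : (K : ℝ) * ∑ m, (x m : ℝ) ≤ d * S := by
        simpa [mul_sum] using sum_le_sum fun m (_ : m ∈ univ) => hK m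
      rw [div_mul_eq_mul_div, le_div_iff₀ (by positivity)]
      nlinarith
    calc Real.exp (ν * S) ≤ Real.exp (ν * K / d * ∑ m, (x m : ℝ)) := Real.exp_le_exp.mpr hexponent
      _ = ∏ m, Real.exp (ν * K / d * x m) := by rw [mul_sum, Real.exp_sum]
      _ ≤ _ := le_add_of_nonneg_right (sum_nonneg fun i _ => hterm_nonneg i)
  · push Not at hbig
    obtain ⟨i, hi⟩ : ∃ i, ∀ m, m ≠ i → x m ≤ K := by
      by_cases h : ∃ i, K < x i
      · obtain ⟨i, hi⟩ := h
        exact ⟨i, fun m hm => hbig i m hm.symm hi⟩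
      · push Not at h
        exact ⟨⟨0, hd⟩, fun m _ => h m⟩
    have hterm : ∏ m, (if m = i then Real.exp (ν * x m) else if x m ≤ K then (1 : ℝ) else 0) =
        Real.exp (ν * x i) := by
      rw [← Fintype.prod_ite_eq' i fun m => Real.exp (ν * x m)]
      refine prod_congr rfl fun m _ => ?_
      split_ifs with h1 h2
      · rfl
      · rfl
      · exact absurd (hi m h1) h2
    calc Real.exp (ν * S) ≤ Real.exp (ν * x i) :=
          Real.exp_le_exp.mpr (mul_le_mul_of_nonpos_left (hsingle i) hν)
      _ ≤ ∑ i, ∏ m, (if m = i then Real.exp (ν * x m) else if x m ≤ K then 1 else 0) :=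
          hterm ▸ single_le_sum (fun i _ => hterm_nonneg i) (mem_univ i)
      _ ≤ _ := le_add_of_nonneg_left (prod_nonneg fun m _ => (Real.exp_pos _).le)

theorem tailPositiveWeight_mul_exp_le {a : ℝ} (ha : 0 ≤ a) (hd : 0 < d) {ν : ℝ} (hν : ν ≤ 0)
    (T l K : ℕ) (n : Fin d → ℕ) :
    (∏ i, tailPositiveWeight T a i (n i)) *
        Real.exp (ν * ∏ i, ((n i : ℝ) + orientationOffset T l i)) ≤
      ∏ m, (a ^ (n m) / ((n m).factorial : ℝ) * Real.exp (ν * K / d * n m)) +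
        ∑ i, ∏ m, a ^ (n m) / ((n m).factorial : ℝ) *
          (if m = i then Real.exp (ν * n m) else if n m ≤ K then 1 else 0) := by
  have hrhs_nonneg : 0 ≤ ∏ m, (a ^ (n m) / ((n m).factorial : ℝ) * Real.exp (ν * K / d * n m)) +
      ∑ i, ∏ m, a ^ (n m) / ((n m).factorial : ℝ) *
        (if m = i then Real.exp (ν * n m) else if n m ≤ K then 1 else 0) :=
    add_nonneg (prod_nonneg fun m _ => by positivity)
      (sum_nonneg fun i _ => prod_nonneg fun m _ => by split_ifs <;> positivity)
  by_cases hn : ∀ i : Fin d, T ≤ (i : ℕ) → n i ≠ 0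
  · set u : Fin d → ℝ := fun i => (n i : ℝ) + orientationOffset T l i
    have hu : ∀ i, 1 ≤ u i := one_le_add_orientationOffset l hn
    have hsub : ∀ s : Finset (Fin d), ∏ i ∈ s, u i ≤ ∏ i, u i := fun s =>
      prod_le_prod_of_subset_of_one_le (subset_univ s) (fun i _ => zero_le_one.trans (hu i))
        fun i _ _ => hu i
    have hle : ∀ i, (n i : ℝ) ≤ u i := fun i =>
      le_add_of_nonneg_right (orientationOffset_nonneg T l i)
    have hsingle : ∀ p, (n p : ℝ) ≤ ∏ i, u i := fun p =>
      (hle p).trans ((prod_singleton u p).symm.le.trans (hsub {p}))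
    have hpair : ∀ p q, p ≠ q → (n p : ℝ) * n q ≤ ∏ i, u i := fun p q hpq =>
      (mul_le_mul (hle p) (hle q) (n q).cast_nonneg (zero_le_one.trans (hu p))).trans
        ((prod_pair hpq).symm.le.trans (hsub {p, q}))
    rw [prod_tailPositiveWeight_of_forall_ne_zero a hn]
    calc (∏ i, a ^ (n i) / ((n i).factorial : ℝ)) * Real.exp (ν * ∏ i, u i)
        ≤ (∏ i, a ^ (n i) / ((n i).factorial : ℝ)) * (∏ m, Real.exp (ν * K / d * n m) +
            ∑ i, ∏ m, (if m = i then Real.exp (ν * n m) else if n m ≤ K then 1 else 0)) :=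
          mul_le_mul_of_nonneg_left (exp_mul_le_of_pair_le hd hν K n hsingle hpair)
            (prod_nonneg fun i _ => by positivity)
      _ = _ := by simp_rw [mul_add, mul_sum, ← prod_mul_distrib]
  · push Not at hn
    obtain ⟨i, hiT, hi⟩ := hn
    rwa [prod_tailPositiveWeight_eq_zero a hiT hi, zero_mul]

theorem hasSum_majorant {a : ℝ} (ha : 0 ≤ a) (c ν : ℝ) (K : ℕ) :
    HasSum (fun n : Fin d → ℕ =>
        ∏ m, (a ^ (n m) / ((n m).factorial : ℝ) * Real.exp (c * n m)) +
          ∑ i, ∏ m, a ^ (n m) / ((n m).factorial : ℝ) *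
            (if m = i then Real.exp (ν * n m) else if n m ≤ K then 1 else 0))
      (Real.exp (a * Real.exp c) ^ d + d * (Real.exp (a * Real.exp ν) *
        (∑ x ∈ range (K + 1), a ^ x / (x.factorial : ℝ)) ^ (d - 1))) := by
  have hfirst := hasSum_fin_pi_prod
    (g := fun (_ : Fin d) (x : ℕ) => a ^ x / (x.factorial : ℝ) * Real.exp (c * x))
    (fun _ _ => by positivity) fun _ => hasSum_pow_div_factorial_mul_exp a c
  rw [prod_const, card_univ, Fintype.card_fin] at hfirst
  have hterm : ∀ i : Fin d, HasSum (fun n : Fin d → ℕ => ∏ m, a ^ (n m) / ((n m).factorial : ℝ) *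
        (if m = i then Real.exp (ν * n m) else if n m ≤ K then 1 else 0))
      (Real.exp (a * Real.exp ν) * (∑ x ∈ range (K + 1), a ^ x / (x.factorial : ℝ)) ^ (d - 1)) := by
    intro i
    have h := hasSum_fin_pi_prod
      (g := fun m (x : ℕ) => a ^ x / (x.factorial : ℝ) *
        (if m = i then Real.exp (ν * x) else if x ≤ K then 1 else 0))
      (s := fun m => if m = i then Real.exp (a * Real.exp ν)
        else ∑ x ∈ range (K + 1), a ^ x / (x.factorial : ℝ))
      (fun _ _ => by split_ifs <;> positivity) fun m => by
        split_ifs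
        · exact hasSum_pow_div_factorial_mul_exp a ν
        · simpa only [mul_ite, mul_one, mul_zero] using hasSum_pow_div_factorial_ite_le a K
    rwa [← mul_prod_erase univ _ (mem_univ i), if_pos rfl,
      prod_congr rfl fun m hm => if_neg (ne_of_mem_erase hm), prod_const,
      card_erase_of_mem (mem_univ i), card_univ, Fintype.card_fin] at h
  simpa using hfirst.add (hasSum_sum (s := univ) fun i _ => hterm i)

theorem exp_neg_mul_majorant_le (hd : 3 ≤ d) {a : ℝ} (ha : 1 ≤ a) {c ν : ℝ}
    (hc : d * Real.exp c ≤ 1) (hν : ν ≤ 0) (K : ℕ) :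
    Real.exp (-a * ((d : ℝ) - 1)) * (Real.exp (a * Real.exp c) ^ d + d *
        (Real.exp (a * Real.exp ν) * (∑ x ∈ range (K + 1), a ^ x / (x.factorial : ℝ)) ^ (d - 1))) ≤
      Real.exp (-a) + d * (K + 1) ^ (d - 1) * (a ^ (K * (d - 1)) * Real.exp (-a)) := by
  have hd3 : (3 : ℝ) ≤ d := by exact_mod_cast hd
  have hfirst : Real.exp (-a * ((d : ℝ) - 1)) * Real.exp (a * Real.exp c) ^ d ≤ Real.exp (-a) := by
    rw [← Real.exp_nat_mul, ← Real.exp_add, Real.exp_le_exp]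
    nlinarith [mul_le_mul_of_nonneg_left hc (zero_le_one.trans ha)]
  have hsecond : Real.exp (-a * ((d : ℝ) - 1)) * Real.exp (a * Real.exp ν) ≤ Real.exp (-a) := by
    rw [← Real.exp_add, Real.exp_le_exp]
    nlinarith [mul_le_mul_of_nonneg_left (Real.exp_le_one_iff.mpr hν) (zero_le_one.trans ha)]
  have hpoly : (∑ x ∈ range (K + 1), a ^ x / (x.factorial : ℝ)) ^ (d - 1) ≤
      (K + 1) ^ (d - 1) * a ^ (K * (d - 1)) := by
    rw [pow_mul, ← mul_pow]
    exact pow_le_pow_left₀ (sum_nonneg fun x _ => by positivity)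
      (sum_range_pow_div_factorial_le ha K) _
  calc Real.exp (-a * ((d : ℝ) - 1)) * (Real.exp (a * Real.exp c) ^ d + d *
        (Real.exp (a * Real.exp ν) * (∑ x ∈ range (K + 1), a ^ x / (x.factorial : ℝ)) ^ (d - 1)))
      = Real.exp (-a * ((d : ℝ) - 1)) * Real.exp (a * Real.exp c) ^ d +
          d * (Real.exp (-a * ((d : ℝ) - 1)) * Real.exp (a * Real.exp ν)) *
            (∑ x ∈ range (K + 1), a ^ x / (x.factorial : ℝ)) ^ (d - 1) := by ring
    _ ≤ Real.exp (-a) + d * Real.exp (-a) * ((K + 1) ^ (d - 1) * a ^ (K * (d - 1))) := by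
        gcongr
    _ = _ := by ring

theorem tendsto_exp_neg_mul_tsum_tailPositiveWeight (hd : 3 ≤ d) {ν : ℝ} (hν : ν < 0) (T l : ℕ) :
    Tendsto (fun a => Real.exp (-a * ((d : ℝ) - 1)) * ∑' n : Fin d → ℕ,
        (∏ i, tailPositiveWeight T a i (n i)) *
          Real.exp (ν * ∏ i, ((n i : ℝ) + orientationOffset T l i))) atTop (𝓝 0) := by
  have hdpos : (0 : ℝ) < d := by exact_mod_cast (by omega : 0 < d)
  obtain ⟨K, hK⟩ : ∃ K : ℕ, (d : ℝ) * Real.exp (ν * K / d) ≤ 1 := by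
    have hdecay : Tendsto (fun K : ℕ => (d : ℝ) * Real.exp (ν / d * K)) atTop (𝓝 0) := by
      simpa using (Real.tendsto_exp_atBot.comp (tendsto_natCast_atTop_atTop.const_mul_atTop_of_neg
        (div_neg_of_neg_of_pos hν hdpos))).const_mul (d : ℝ)
    obtain ⟨K, hK⟩ := (hdecay.eventually (eventually_le_nhds one_pos)).exists
    exact ⟨K, by rwa [div_mul_eq_mul_div] at hK⟩
  have hbound : Tendsto (fun a => Real.exp (-a) + d * (K + 1) ^ (d - 1) *
      (a ^ (K * (d - 1)) * Real.exp (-a))) atTop (𝓝 0) := by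
    simpa using Real.tendsto_exp_neg_atTop_nhds_zero.add
      ((Real.tendsto_pow_mul_exp_neg_atTop_nhds_zero (K * (d - 1))).const_mul
        ((d : ℝ) * (K + 1) ^ (d - 1)))
  refine tendsto_of_tendsto_of_tendsto_of_le_of_le' tendsto_const_nhds hbound ?_ ?_
  · filter_upwards [eventually_ge_atTop 0] with a ha
    exact mul_nonneg (Real.exp_pos _).le (tsum_nonneg fun n => mul_nonneg
      (prod_nonneg fun i _ => tailPositiveWeight_nonneg T ha i (n i)) (Real.exp_pos _).le)
  · filter_upwards [eventually_ge_atTop 1] with a ha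
    have htsum_le := hasSum_le (tailPositiveWeight_mul_exp_le (zero_le_one.trans ha) (by omega)
      hν.le T l K) (summable_tailPositiveWeight_mul_exp T l (zero_le_one.trans ha) hν.le).hasSum
      (hasSum_majorant (d := d) (zero_le_one.trans ha) (ν * K / d) ν K)
    exact (mul_le_mul_of_nonneg_left htsum_le (Real.exp_pos _).le).trans
      (exp_neg_mul_majorant_le hd ha hK hν.le K)

end Remainder

theorem exp_neg_mul_tsum_eq_add_tsum_tailPositiveWeight {d T : ℕ} (hT : T ≤ d) (l : ℕ) {a ν : ℝ}
    (ha : 0 ≤ a) (hν : ν ≤ 0) :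
    Real.exp (-a * ((d : ℝ) - 1)) * ∑' n : Fin d → ℕ, (∏ i, a ^ (n i) / ((n i).factorial : ℝ)) *
        Real.exp (ν * ∏ i, ((n i : ℝ) + orientationOffset T l i)) =
      Real.exp a * (1 - (1 - Real.exp (-a)) ^ (d - T)) +
        Real.exp (-a * ((d : ℝ) - 1)) * ∑' n : Fin d → ℕ, (∏ i, tailPositiveWeight T a i (n i)) *
          Real.exp (ν * ∏ i, ((n i : ℝ) + orientationOffset T l i)) := by
  have hall := hasSum_fin_pi_prod (g := fun (_ : Fin d) (x : ℕ) => a ^ x / (x.factorial : ℝ))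
    (fun _ _ => by positivity) fun _ => Real.hasSum_pow_div_factorial a
  have htail := hasSum_prod_tailPositiveWeight (d := d) T ha
  rw [prod_const, card_univ, Fintype.card_fin] at hall
  rw [prod_ite_val_lt hT] at htail
  rw [tsum_congr (prod_mul_exp_eq_add_tailPositiveWeight T l a ν),
    (hall.sub htail).summable.tsum_add (summable_tailPositiveWeight_mul_exp T l ha hν),
    (hall.sub htail).tsum_eq, mul_add, exp_neg_mul_sub_eq hT]

theorem second_order_correlation_series_limit_general
    (d k l : ℕ) (hd : 3 ≤ d) (hk2 : k ≤ d - 1)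
    (hl1 : d - 2 * k ≤ l) (hl2 : l ≤ d - k) (ν : ℝ) (hν : ν < 0) :
    Tendsto (fun a : ℝ =>
        Real.exp (-a * ((d : ℝ) - 1)) *
          ∑' n : Fin d → ℕ,
            (∏ i, a ^ (n i) / ((n i).factorial : ℝ)) *
              Real.exp (ν *
                ∑ D ∈ (Finset.univ.filter
                    (fun i : Fin d => (i : ℕ) < 2 * d - 2 * k - l)).powerset,
                  (2 : ℝ) ^ (D.filter (fun i : Fin d => (i : ℕ) < l)).card *
                    ∏ m ∈ Finset.univ \ D, (n m : ℝ)))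
      atTop (nhds (2 * (k : ℝ) + l - d)) := by
  set T := 2 * d - 2 * k - l
  have hT : T ≤ d := by omega
  have hlimit : ((d - T : ℕ) : ℝ) + 0 = 2 * k + l - d := by
    have hcount : d - T + d = 2 * k + l := by omega
    have hcast := congrArg (Nat.cast (R := ℝ)) hcount
    push_cast at hcast
    linarith
  simp_rw [sum_powerset_eq_prod_add_orientationOffset]
  rw [← hlimit]
  refine ((tendsto_exp_mul_one_sub_one_sub_exp_neg_pow (d - T)).add
    (tendsto_exp_neg_mul_tsum_tailPositiveWeight hd hν T l)).congr' ?_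
  filter_upwards [eventually_ge_atTop 0] with a ha
  exact (exp_neg_mul_tsum_eq_add_tsum_tailPositiveWeight hT l ha hν.le).symm

/-- Series form of Proposition 3(b): the limit equals `2k - d + l`. -/
theorem second_order_correlation_series_limit
    (d k l : ℕ) (hd : 3 ≤ d) (hk1 : 1 ≤ k) (hk2 : k ≤ d - 1)
    (hl1 : d - 2 * k ≤ l) (hl2 : l ≤ d - k) (ν : ℝ) (hν : ν < 0) :
    Tendsto (fun a : ℝ =>
        Real.exp (-a * ((d : ℝ) - 1)) *
          ∑' n : Fin d → ℕ,
            (∏ i, a ^ (n i) / ((n i).factorial : ℝ)) *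
              Real.exp (ν *
                ∑ D ∈ (Finset.univ.filter
                    (fun i : Fin d => (i : ℕ) < 2 * d - 2 * k - l)).powerset,
                  (2 : ℝ) ^ (D.filter (fun i : Fin d => (i : ℕ) < l)).card *
                    ∏ m ∈ Finset.univ \ D, (n m : ℝ)))
      atTop (nhds (2 * (k : ℝ) + l - d)) :=
  second_order_correlation_series_limit_general d k l hd hk2 hl1 hl2 ν hν
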